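/- Let H be a Hopf algebra over a field k and A a left H-module algebra, with smash product A # H. Then for every n ≥ 1 there is an isomorphism of H-H-bimodules (A # H)^{⊗_H n} ≅ A^{⊗n} ⊗ H, where H acts on A^{⊗n} ⊗ H on the left diagonally via the iterated comultiplication (acting on each tensor factor of A via the module-algebra action and on the factor H by left multiplication) and on the right by right multiplication on the factor H; explicitly, a # u ⊗_H b # v ⊗_H ⋯ ⊗_H c # w ↦ a ⊗ u₍₁₎·b ⊗ ⋯ ⊗ (u₍ₙ₋₁₎v₍ₙ₋₂₎⋯)·c ⊗ u₍ₙ₎v₍ₙ₋₁₎⋯w. -/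

import Mathlib

set_option linter.unusedSectionVars false

namespace SubalgDepth

open Function Finsupp MulOpposite

variable {k : Type*} [Field k] {A : Type*} [Ring A] [Algebra k A]

/-- The free `k`-module on `(n+1)`-tuples of elements of `A`; the relative tensor power
`A ⊗_B A ⊗_B ⋯ ⊗_B A` (`n+1` factors) is a quotient of this. -/
abbrev TF (k : Type*) [Field k] (A : Type*) [Ring A] (n : ℕ) : Type _ := ((Fin (n+1) → A) →₀ k)

/-- Relators: `k`-multilinearity and `B`-balancing at each adjacent pair of slots. -/
def relSet (B : Subalgebra k A) (n : ℕ) : Set (TF k A n) :=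
  { z | (∃ (v : Fin (n+1) → A) (i : Fin (n+1)) (x y : A),
      z = single (update v i (x+y)) 1 - single (update v i x) 1 - single (update v i y) 1)
   ∨ (∃ (v : Fin (n+1) → A) (i : Fin (n+1)) (c : k) (x : A),
      z = single (update v i (c • x)) 1 - c • single (update v i x) 1)
   ∨ (∃ (v : Fin (n+1) → A) (i : Fin n) (b : B),
      z = single (update v i.castSucc (v i.castSucc * (b : A))) 1
        - single (update v i.succ ((b : A) * v i.succ)) 1) }

noncomputable def Rel (B : Subalgebra k A) (n : ℕ) : Submodule k (TF k A n) := Submodule.span k (relSet B n)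

/-- The `(n+1)`-st relative tensor power `A^{⊗_B (n+1)}` of `A` over the subalgebra `B`. -/
def TP (B : Subalgebra k A) (n : ℕ) : Type _ := TF k A n ⧸ Rel B n

noncomputable instance (B : Subalgebra k A) (n : ℕ) : AddCommGroup (TP B n) :=
  inferInstanceAs (AddCommGroup (TF k A n ⧸ Rel B n))
noncomputable instance (B : Subalgebra k A) (n : ℕ) : Module k (TP B n) :=
  inferInstanceAs (Module k (TF k A n ⧸ Rel B n))

/-- The class of the pure tensor `v 0 ⊗ v 1 ⊗ ⋯ ⊗ v n` in `A^{⊗_B (n+1)}`. -/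
noncomputable def mk (B : Subalgebra k A) (n : ℕ) (v : Fin (n+1) → A) : TP B n :=
  Submodule.Quotient.mk (single v 1)

/-- Left multiplication by `a` on the first tensor factor, on the free module. -/
noncomputable def lF (n : ℕ) (a : A) : TF k A n →ₗ[k] TF k A n :=
  lmapDomain k k (fun v => update v 0 (a * v 0))

/-- Right multiplication by `a` on the last tensor factor, on the free module. -/
noncomputable def rF (n : ℕ) (a : A) : TF k A n →ₗ[k] TF k A n :=
  lmapDomain k k (fun v => update v (Fin.last n) (v (Fin.last n) * a))

lemma lF_single (n : ℕ) (a : A) (v : Fin (n+1) → A) (c : k) :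
    lF (k := k) n a (single v c) = single (update v 0 (a * v 0)) c := by
  simp [lF, lmapDomain_apply, mapDomain_single]

lemma rF_single (n : ℕ) (a : A) (v : Fin (n+1) → A) (c : k) :
    rF (k := k) n a (single v c) = single (update v (Fin.last n) (v (Fin.last n) * a)) c := by
  simp [rF, lmapDomain_apply, mapDomain_single]

private lemma upd0 (n : ℕ) (a : A) (v : Fin (n+1) → A) {i : Fin (n+1)} (hi : i ≠ 0) (z : A) :
    update (update v i z) 0 (a * (update v i z) 0) = update (update v 0 (a * v 0)) i z := by
  rw [Function.update_of_ne (Ne.symm hi), Function.update_comm (Ne.symm hi)]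

private lemma updl (n : ℕ) (a : A) (v : Fin (n+1) → A) {i : Fin (n+1)} (hi : i ≠ Fin.last n)
    (z : A) :
    update (update v i z) (Fin.last n) ((update v i z) (Fin.last n) * a)
      = update (update v (Fin.last n) (v (Fin.last n) * a)) i z := by
  rw [Function.update_of_ne (Ne.symm hi), Function.update_comm (Ne.symm hi)]

lemma lF_le (B : Subalgebra k A) (n : ℕ) (a : A) :
    Rel B n ≤ (Rel B n).comap (lF (k := k) n a) := by
  rw [Rel, Submodule.span_le]
  rintro z (⟨v, i, x, y, rfl⟩ | ⟨v, i, c, x, rfl⟩ | ⟨v, i, b, rfl⟩)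
  · simp only [SetLike.mem_coe, Set.mem_setOf_eq, Submodule.mem_comap, map_sub, lF_single]
    apply Submodule.subset_span
    by_cases hi : i = 0
    · subst hi
      have h1 : update (update v 0 (x+y)) 0 (a * (update v 0 (x+y)) 0)
          = update v 0 (a*x + a*y) := by simp [mul_add]
      have h2 : update (update v 0 x) 0 (a * (update v 0 x) 0) = update v 0 (a*x) := by simp
      have h3 : update (update v 0 y) 0 (a * (update v 0 y) 0) = update v 0 (a*y) := by simp
      rw [h1, h2, h3]
      exact Or.inl ⟨v, 0, a*x, a*y, rfl⟩
    · rw [upd0 n a v hi, upd0 n a v hi, upd0 n a v hi]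
      exact Or.inl ⟨update v 0 (a * v 0), i, x, y, rfl⟩
  · simp only [SetLike.mem_coe, Set.mem_setOf_eq, Submodule.mem_comap, map_sub, map_smul, lF_single]
    apply Submodule.subset_span
    by_cases hi : i = 0
    · subst hi
      have h1 : update (update v 0 (c • x)) 0 (a * (update v 0 (c • x)) 0)
          = update v 0 (c • (a * x)) := by simp [mul_smul_comm]
      have h2 : update (update v 0 x) 0 (a * (update v 0 x) 0) = update v 0 (a*x) := by simp
      rw [h1, h2]
      exact Or.inr (Or.inl ⟨v, 0, c, a*x, rfl⟩)
    · rw [upd0 n a v hi, upd0 n a v hi]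
      exact Or.inr (Or.inl ⟨update v 0 (a * v 0), i, c, x, rfl⟩)
  · simp only [SetLike.mem_coe, Set.mem_setOf_eq, Submodule.mem_comap, map_sub, lF_single]
    apply Submodule.subset_span
    have h2 : update (update v i.succ ((b:A) * v i.succ)) 0
          (a * (update v i.succ ((b:A) * v i.succ)) 0)
        = update (update v 0 (a * v 0)) i.succ
            ((b:A) * (update v 0 (a * v 0)) i.succ) := by
      rw [upd0 n a v (Fin.succ_ne_zero i), Function.update_of_ne (Fin.succ_ne_zero i)]
    by_cases hi : i.castSucc = 0
    · have h1 : update (update v i.castSucc (v i.castSucc * (b:A))) 0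
            (a * (update v i.castSucc (v i.castSucc * (b:A))) 0)
          = update (update v 0 (a * v 0)) i.castSucc
              ((update v 0 (a * v 0)) i.castSucc * (b:A)) := by
        rw [hi]; simp [mul_assoc]
      rw [h1, h2]
      exact Or.inr (Or.inr ⟨update v 0 (a * v 0), i, b, rfl⟩)
    · have h1 : update (update v i.castSucc (v i.castSucc * (b:A))) 0
            (a * (update v i.castSucc (v i.castSucc * (b:A))) 0)
          = update (update v 0 (a * v 0)) i.castSucc
              ((update v 0 (a * v 0)) i.castSucc * (b:A)) := by
        rw [upd0 n a v hi, Function.update_of_ne hi]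
      rw [h1, h2]
      exact Or.inr (Or.inr ⟨update v 0 (a * v 0), i, b, rfl⟩)

lemma rF_le (B : Subalgebra k A) (n : ℕ) (a : A) :
    Rel B n ≤ (Rel B n).comap (rF (k := k) n a) := by
  rw [Rel, Submodule.span_le]
  rintro z (⟨v, i, x, y, rfl⟩ | ⟨v, i, c, x, rfl⟩ | ⟨v, i, b, rfl⟩)
  · simp only [SetLike.mem_coe, Set.mem_setOf_eq, Submodule.mem_comap, map_sub, rF_single]
    apply Submodule.subset_span
    by_cases hi : i = Fin.last n
    · subst hi
      have h1 : update (update v (Fin.last n) (x+y)) (Fin.last n)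
            ((update v (Fin.last n) (x+y)) (Fin.last n) * a)
          = update v (Fin.last n) (x*a + y*a) := by simp [add_mul]
      have h2 : update (update v (Fin.last n) x) (Fin.last n)
            ((update v (Fin.last n) x) (Fin.last n) * a) = update v (Fin.last n) (x*a) := by simp
      have h3 : update (update v (Fin.last n) y) (Fin.last n)
            ((update v (Fin.last n) y) (Fin.last n) * a) = update v (Fin.last n) (y*a) := by simp
      rw [h1, h2, h3]
      exact Or.inl ⟨v, Fin.last n, x*a, y*a, rfl⟩
    · rw [updl n a v hi, updl n a v hi, updl n a v hi]
      exact Or.inl ⟨update v (Fin.last n) (v (Fin.last n) * a), i, x, y, rfl⟩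
  · simp only [SetLike.mem_coe, Set.mem_setOf_eq, Submodule.mem_comap, map_sub, map_smul, rF_single]
    apply Submodule.subset_span
    by_cases hi : i = Fin.last n
    · subst hi
      have h1 : update (update v (Fin.last n) (c • x)) (Fin.last n)
            ((update v (Fin.last n) (c • x)) (Fin.last n) * a)
          = update v (Fin.last n) (c • (x * a)) := by simp [smul_mul_assoc]
      have h2 : update (update v (Fin.last n) x) (Fin.last n)
            ((update v (Fin.last n) x) (Fin.last n) * a) = update v (Fin.last n) (x*a) := by simp
      rw [h1, h2]
      exact Or.inr (Or.inl ⟨v, Fin.last n, c, x*a, rfl⟩)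
    · rw [updl n a v hi, updl n a v hi]
      exact Or.inr (Or.inl ⟨update v (Fin.last n) (v (Fin.last n) * a), i, c, x, rfl⟩)
  · simp only [SetLike.mem_coe, Set.mem_setOf_eq, Submodule.mem_comap, map_sub, rF_single]
    apply Submodule.subset_span
    have hcs : i.castSucc ≠ Fin.last n := (Fin.castSucc_lt_last i).ne
    have h1 : update (update v i.castSucc (v i.castSucc * (b:A))) (Fin.last n)
          ((update v i.castSucc (v i.castSucc * (b:A))) (Fin.last n) * a)
        = update (update v (Fin.last n) (v (Fin.last n) * a)) i.castSucc
            ((update v (Fin.last n) (v (Fin.last n) * a)) i.castSucc * (b:A)) := by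
      rw [updl n a v hcs, Function.update_of_ne hcs]
    by_cases hi : i.succ = Fin.last n
    · have h2 : update (update v i.succ ((b:A) * v i.succ)) (Fin.last n)
            ((update v i.succ ((b:A) * v i.succ)) (Fin.last n) * a)
          = update (update v (Fin.last n) (v (Fin.last n) * a)) i.succ
              ((b:A) * (update v (Fin.last n) (v (Fin.last n) * a)) i.succ) := by
        rw [hi]; simp [mul_assoc]
      rw [h1, h2]
      exact Or.inr (Or.inr ⟨update v (Fin.last n) (v (Fin.last n) * a), i, b, rfl⟩)
    · have h2 : update (update v i.succ ((b:A) * v i.succ)) (Fin.last n)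
            ((update v i.succ ((b:A) * v i.succ)) (Fin.last n) * a)
          = update (update v (Fin.last n) (v (Fin.last n) * a)) i.succ
              ((b:A) * (update v (Fin.last n) (v (Fin.last n) * a)) i.succ) := by
        rw [updl n a v hi, Function.update_of_ne hi]
      rw [h1, h2]
      exact Or.inr (Or.inr ⟨update v (Fin.last n) (v (Fin.last n) * a), i, b, rfl⟩)

/-- Left multiplication by `a ∈ A` on the first factor of `A^{⊗_B (n+1)}`. -/
noncomputable def Lmul (B : Subalgebra k A) (n : ℕ) (a : A) : TP B n →ₗ[k] TP B n :=
  Submodule.mapQ _ _ (lF n a) (lF_le B n a)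

/-- Right multiplication by `a ∈ A` on the last factor of `A^{⊗_B (n+1)}`. -/
noncomputable def Rmul (B : Subalgebra k A) (n : ℕ) (a : A) : TP B n →ₗ[k] TP B n :=
  Submodule.mapQ _ _ (rF n a) (rF_le B n a)

/-- `A^{⊗_B (m+1)} | q ⋅ A^{⊗_B (m'+1)}` as bimodules, where the left scalars are taken in
`SL ⊆ A` and the right scalars in `SR ⊆ A`:  there is a split additive (hence `k`-linear)
embedding commuting with the left multiplications by elements of `SL` on the first tensorand
and right multiplications by elements of `SR` on the last tensorand. -/
def TPdvd (B : Subalgebra k A) (m m' q : ℕ) (SL SR : Set A) : Prop :=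
  ∃ (f : TP B m →+ (Fin q → TP B m')) (g : (Fin q → TP B m') →+ TP B m),
    (∀ a ∈ SL, ∀ x, f (Lmul B m a x) = fun j => Lmul B m' a (f x j)) ∧
    (∀ a ∈ SR, ∀ x, f (Rmul B m a x) = fun j => Rmul B m' a (f x j)) ∧
    (∀ a ∈ SL, ∀ y, g (fun j => Lmul B m' a (y j)) = Lmul B m a (g y)) ∧
    (∀ a ∈ SR, ∀ y, g (fun j => Rmul B m' a (y j)) = Rmul B m a (g y)) ∧
    (∀ x, g (f x) = x)

/-- Depth `1`: `A | q ⋅ B` as `B`-`B`-bimodules. -/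
def hasDepth1 (B : Subalgebra k A) : Prop :=
  ∃ (q : ℕ) (f : TP B 0 →+ (Fin q → B)) (g : (Fin q → B) →+ TP B 0),
    (∀ (b : B) x, f (Lmul B 0 (b:A) x) = fun j => b * f x j) ∧
    (∀ (b : B) x, f (Rmul B 0 (b:A) x) = fun j => f x j * b) ∧
    (∀ (b : B) y, g (fun j => b * y j) = Lmul B 0 (b:A) (g y)) ∧
    (∀ (b : B) y, g (fun j => y j * b) = Rmul B 0 (b:A) (g y)) ∧
    (∀ x, g (f x) = x)

/-- `B ⊆ A` has depth `2n+1`:  `A^{⊗_B (n+1)} | q ⋅ A^{⊗_B n}` as `B`-`B`-bimodules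
(`A | q ⋅ B` when `n = 0`). -/
def hasOddDepth (B : Subalgebra k A) : ℕ → Prop
  | 0 => hasDepth1 B
  | n+1 => ∃ q, TPdvd B (n+1) n q (B : Set A) (B : Set A)

/-- `B ⊆ A` has left depth `2n` (`n ≥ 1`): `A^{⊗_B (n+1)} | q ⋅ A^{⊗_B n}` as
`B`-`A`-bimodules. -/
def hasLeftEvenDepth (B : Subalgebra k A) : ℕ → Prop
  | 0 => False
  | n+1 => ∃ q, TPdvd B (n+1) n q (B : Set A) Set.univ

/-- `B ⊆ A` has right depth `2n` (`n ≥ 1`): `A^{⊗_B (n+1)} | q ⋅ A^{⊗_B n}` as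
`A`-`B`-bimodules. -/
def hasRightEvenDepth (B : Subalgebra k A) : ℕ → Prop
  | 0 => False
  | n+1 => ∃ q, TPdvd B (n+1) n q Set.univ (B : Set A)

/-- `B ⊆ A` has depth `m`. -/
def hasDepth (B : Subalgebra k A) (m : ℕ) : Prop :=
  (∃ n, m = 2*n+1 ∧ hasOddDepth B n) ∨
  (∃ n, m = 2*n ∧ (hasLeftEvenDepth B n ∨ hasRightEvenDepth B n))

/-- The minimum depth `d(B, A) ∈ ℕ ∪ {∞}` of the subalgebra pair `B ⊆ A`. -/
noncomputable def minDepth (B : Subalgebra k A) : ℕ∞ :=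
  sInf {m : ℕ∞ | ∃ j : ℕ, m = j ∧ hasDepth B j}

/-- The minimum odd depth: the least odd integer `≥ d(B, A)`. -/
noncomputable def minOddDepth (B : Subalgebra k A) : ℕ∞ :=
  sInf {m : ℕ∞ | ∃ j : ℕ, m = j ∧ Odd j ∧ minDepth B ≤ j}

end SubalgDepth

namespace HopfModDepth

open MulOpposite TensorProduct

universe u

variable (k H : Type u) [Field k] [Ring H] [Bialgebra k H]

/-- A left `H`-module over the `k`-bialgebra `H`: a `k`-vector space together with a
`k`-algebra map `H → End_k V`. -/
structure LVec : Type (u+1) where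
  V : Type u
  [acg : AddCommGroup V]
  [mod : Module k V]
  ρ : H →ₐ[k] Module.End k V

attribute [instance] LVec.acg LVec.mod

variable {k H}

/-- The tensor product of two left `H`-modules, with the diagonal left `H`-action
`h · (m ⊗ n) = Σ (h₍₁₎ · m) ⊗ (h₍₂₎ · n)`. -/
noncomputable def LVec.tmul (M N : LVec k H) : LVec k H where
  V := TensorProduct k M.V N.V
  ρ := (Module.endTensorEndAlgHom (R := k) (S := k) (A := k)).comp
        ((Algebra.TensorProduct.map M.ρ N.ρ).comp (Bialgebra.comulAlgHom k H))

/-- The trivial left `H`-module `k_ε` given by the counit. -/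
noncomputable def LVec.triv : LVec k H where
  V := k
  ρ := (Algebra.ofId k (Module.End k k)).comp (Bialgebra.counitAlgHom k H)

/-- Direct sum (finite product) of left `H`-modules. -/
noncomputable def LVec.pi {m : ℕ} (F : Fin m → LVec k H) : LVec k H where
  V := ∀ i, (F i).V
  ρ :=
  { toFun := fun x => LinearMap.pi (fun i => ((F i).ρ x).comp (LinearMap.proj i))
    map_one' := LinearMap.ext fun v => funext fun i => by simp
    map_mul' := fun x y => LinearMap.ext fun v => funext fun i => by simp
    map_zero' := LinearMap.ext fun v => funext fun i => by simp
    map_add' := fun x y => LinearMap.ext fun v => funext fun i => by simp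
    commutes' := fun r => LinearMap.ext fun v => funext fun i => by
      simp only [LinearMap.pi_apply, LinearMap.comp_apply, LinearMap.proj_apply,
        AlgHom.commutes, Module.algebraMap_end_apply]
      rfl }

/-- `q` copies of a left `H`-module. -/
noncomputable def LVec.copies (q : ℕ) (N : LVec k H) : LVec k H := LVec.pi (fun _ : Fin q => N)

/-- Tensor powers: `tpow W n = W^{⊗(n+1)}`. -/
noncomputable def LVec.tpow (W : LVec k H) : ℕ → LVec k H
  | 0 => W
  | n+1 => (W.tpow n).tmul W

/-- `Tsum W n = T_{n+1}(W) = W ⊕ W^{⊗2} ⊕ ⋯ ⊕ W^{⊗(n+1)}`. -/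
noncomputable def LVec.Tsum (W : LVec k H) (n : ℕ) : LVec k H :=
  LVec.pi (fun i : Fin (n+1) => W.tpow i)

/-- `M | N` for left `H`-modules: `M` is isomorphic to a direct summand of `N`. -/
def LVec.Dvd (M N : LVec k H) : Prop :=
  ∃ (f : M.V →ₗ[k] N.V) (g : N.V →ₗ[k] M.V),
    (∀ x v, f (M.ρ x v) = N.ρ x (f v)) ∧
    (∀ x w, g (N.ρ x w) = M.ρ x (g w)) ∧
    (∀ v, g (f v) = v)

/-- Isomorphism of left `H`-modules. -/
def LVec.Iso (M N : LVec k H) : Prop :=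
  ∃ (f : M.V →ₗ[k] N.V) (g : N.V →ₗ[k] M.V),
    (∀ x v, f (M.ρ x v) = N.ρ x (f v)) ∧
    (∀ x w, g (N.ρ x w) = M.ρ x (g w)) ∧
    (∀ v, g (f v) = v) ∧ (∀ w, f (g w) = w)

/-- A left `H`-module `W` has depth `n`. -/
def LVec.hasDepth (W : LVec k H) : ℕ → Prop
  | 0 => ∃ q, W.Iso (LVec.copies q (LVec.triv (k := k) (H := H)))
  | n+1 => ∃ q, (W.Tsum (n+1)).Dvd (LVec.copies q (W.Tsum n))

/-- The minimum depth `d(W, {}_H𝓜)` of the left `H`-module `W`. -/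
noncomputable def LVec.minDepth (W : LVec k H) : ℕ∞ :=
  sInf {m : ℕ∞ | ∃ j : ℕ, m = j ∧ W.hasDepth j}

end HopfModDepth

namespace Smash

open MulOpposite TensorProduct HopfModDepth

universe u

variable (k H A : Type u) [Field k] [Ring H] [Bialgebra k H] [Ring A] [Algebra k A]

/-- For an action `ρ` of `H` on `A`, the map `ν : H ⊗ A → A ⊗ H`,
`h ⊗ a ↦ Σ (h₍₁₎ · a) ⊗ h₍₂₎`. -/
noncomputable def nu (ρ : H →ₐ[k] Module.End k A) : (H ⊗[k] A) →ₗ[k] (A ⊗[k] H) :=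
  (LinearMap.rTensor H (TensorProduct.lift ρ.toLinearMap)) ∘ₗ
    (TensorProduct.assoc k H A H).symm.toLinearMap ∘ₗ
    (LinearMap.lTensor H (TensorProduct.comm k H A).toLinearMap) ∘ₗ
    (TensorProduct.assoc k H H A).toLinearMap ∘ₗ
    (LinearMap.rTensor A (Bialgebra.comulAlgHom k H).toLinearMap)

/-- `ρ` makes `A` a left `H`-module algebra: `h · 1 = ε(h)1` and
`h · (ab) = Σ (h₍₁₎ · a)(h₍₂₎ · b)` (the right-hand side being multiplication composed with
the diagonal action of `h` on `A ⊗ A`). -/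
def IsModuleAlgebra (ρ : H →ₐ[k] Module.End k A) : Prop :=
  (∀ h : H, ρ h 1 = Bialgebra.counitAlgHom k H h • (1 : A)) ∧
  (∀ h : H, ρ h ∘ₗ LinearMap.mul' k A
    = (LinearMap.mul' k A) ∘ₗ
      ((({ V := A, ρ := ρ } : LVec k H).tmul ({ V := A, ρ := ρ } : LVec k H)).ρ h))

/-- Data exhibiting `S` as the smash product `A # H`: a linear equivalence `A ⊗ H ≃ S`
carrying the unit to the unit and satisfying the smash-product multiplication rules
`(a#h)(b#h') = a(h₍₁₎·b) # h₍₂₎h'` on a spanning set. -/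
structure SmashData (ρ : H →ₐ[k] Module.End k A) (S : Type u) [Ring S] [Algebra k S] :
    Type u where
  e : (A ⊗[k] H) ≃ₗ[k] S
  unit : e ((1 : A) ⊗ₜ[k] (1 : H)) = 1
  mulAA : ∀ a b : A, e (a ⊗ₜ[k] 1) * e (b ⊗ₜ[k] 1) = e ((a * b) ⊗ₜ[k] 1)
  mulHH : ∀ h h' : H, e ((1:A) ⊗ₜ[k] h) * e ((1:A) ⊗ₜ[k] h') = e ((1:A) ⊗ₜ[k] (h * h'))
  mulAH : ∀ (a : A) (h : H), e (a ⊗ₜ[k] (1:H)) * e ((1:A) ⊗ₜ[k] h) = e (a ⊗ₜ[k] h)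
  mulHA : ∀ (h : H) (a : A),
    e ((1:A) ⊗ₜ[k] h) * e (a ⊗ₜ[k] (1:H)) = e (nu k H A ρ (h ⊗ₜ[k] a))

end Smash

namespace HopfModDepth

open TensorProduct

universe u

variable {k H : Type u} [Field k] [Ring H] [Bialgebra k H]

/-- Pure tensors in the tensor powers of a left `H`-module:
`tprod W n a = a 0 ⊗ a 1 ⊗ ⋯ ⊗ a n ∈ W^{⊗(n+1)}`. -/
noncomputable def LVec.tprod (W : LVec k H) : ∀ n : ℕ, (Fin (n+1) → W.V) → (W.tpow n).V
  | 0, a => a 0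
  | n+1, a => ((W.tprod n) (fun i => a i.castSucc)) ⊗ₜ[k] (a (Fin.last (n+1)))

/-- The left regular `H`-module. -/
noncomputable def LVec.regular (k H : Type u) [Field k] [Ring H] [Bialgebra k H] :
    LVec k H :=
  { V := H, ρ := Algebra.lmul k H }

end HopfModDepth

/-!
Every element of `A # H` is a sum of products `(a # 1)(1 # h)`, and left multiplication by
`1 # h` on `A # H ≅ A ⊗ H` is the diagonal action `h · (a ⊗ u) = Σ h₍₁₎ · a ⊗ h₍₂₎u`. Reading a
pure tensor `s₀ ⊗_H ⋯ ⊗_H sₙ` from left to right and pushing the `H`-part of each factor into the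
next one gives a map to `A^{⊗(n+1)} ⊗ H`; it is balanced over `H` precisely because moving `1 # h`
across a tensor sign is what the construction does anyway. Its inverse sends
`a₀ ⊗ ⋯ ⊗ aₙ ⊗ h` to `(a₀ # 1) ⊗_H ⋯ ⊗_H (aₙ # h)`. Right `H`-linearity is immediate, and left
`H`-linearity reduces, through coassociativity of the diagonal action, to the case of one factor.
-/

open TensorProduct in
lemma LinearMap.lTensor_assoc_symm_tmul {R M N P Q : Type*} [CommSemiring R] [AddCommMonoid M]
    [AddCommMonoid N] [AddCommMonoid P] [AddCommMonoid Q] [Module R M] [Module R N] [Module R P]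
    [Module R Q] (f : P →ₗ[R] Q) (m : M) (x : N ⊗[R] P) :
    f.lTensor (M ⊗[R] N) ((TensorProduct.assoc R M N P).symm (m ⊗ₜ x))
      = (TensorProduct.assoc R M N Q).symm (m ⊗ₜ f.lTensor N x) := by
  simp [LinearMap.lTensor_tensor]

namespace HopfModDepth.LVec

open TensorProduct

universe u

variable {k H : Type u} [Field k] [Ring H] [Bialgebra k H]

/-- `(M.tmul N).ρ h` is `pairAct M N (Δ h)` by definition; keeping `Δ h` a free variable allows
induction on it. -/
noncomputable def pairAct (M N : LVec k H) :
    H ⊗[k] H →ₗ[k] Module.End k (M.V ⊗[k] N.V) :=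
  (Module.endTensorEndAlgHom.comp (Algebra.TensorProduct.map M.ρ N.ρ)).toLinearMap

lemma pairAct_tmul (M N : LVec k H) (x y : H) :
    pairAct M N (x ⊗ₜ y) = TensorProduct.map (M.ρ x) (N.ρ y) :=
  TensorProduct.ext' fun _ _ => rfl

lemma pairAct_lTensor (M Y Z : LVec k H) (f : Y.V →ₗ[k] Z.V)
    (hf : ∀ x y, f (Y.ρ x y) = Z.ρ x (f y)) (c : H ⊗[k] H) (t : M.V ⊗[k] Y.V) :
    pairAct M Z c (f.lTensor M.V t) = f.lTensor M.V (pairAct M Y c t) := by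
  induction c using TensorProduct.induction_on with
  | zero => simp
  | tmul x y =>
    induction t using TensorProduct.induction_on with
    | zero => simp
    | tmul m w => simp [pairAct_tmul, hf]
    | add t₁ t₂ h₁ h₂ => simp only [map_add, h₁, h₂]
  | add c₁ c₂ h₁ h₂ => simp only [map_add, LinearMap.add_apply, h₁, h₂]

lemma tmul_ρ_lTensor (M Y Z : LVec k H) (f : Y.V →ₗ[k] Z.V)
    (hf : ∀ x y, f (Y.ρ x y) = Z.ρ x (f y)) (h : H) (t : M.V ⊗[k] Y.V) :
    (M.tmul Z).ρ h (f.lTensor M.V t) = f.lTensor M.V ((M.tmul Y).ρ h t) :=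
  pairAct_lTensor M Y Z f hf _ t

noncomputable def tripleActLeft (M N P : LVec k H) :
    (H ⊗[k] H) ⊗[k] H →ₗ[k] Module.End k ((M.V ⊗[k] N.V) ⊗[k] P.V) :=
  homTensorHomMap (RingHom.id k) _ _ _ _ ∘ₗ TensorProduct.map (pairAct M N) P.ρ.toLinearMap

noncomputable def tripleActRight (M N P : LVec k H) :
    H ⊗[k] (H ⊗[k] H) →ₗ[k] Module.End k (M.V ⊗[k] (N.V ⊗[k] P.V)) :=
  homTensorHomMap (RingHom.id k) _ _ _ _ ∘ₗ TensorProduct.map M.ρ.toLinearMap (pairAct N P)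

lemma pairAct_tmul_left (M N P : LVec k H) (c : H ⊗[k] H) (z : (M.V ⊗[k] N.V) ⊗[k] P.V) :
    pairAct (M.tmul N) P c z = tripleActLeft M N P (Coalgebra.comul.rTensor H c) z := by
  induction c using TensorProduct.induction_on with
  | zero => simp only [map_zero, LinearMap.zero_apply]; rfl
  | tmul x y =>
    induction z using TensorProduct.induction_on with
    | zero => exact map_zero _
    | tmul w p =>
      simp only [pairAct_tmul, tripleActLeft, LinearMap.rTensor_tmul, LinearMap.coe_comp,
        Function.comp_apply, map_tmul, AlgHom.toLinearMap_apply, homTensorHomMap_apply]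
      rfl
    | add z₁ z₂ h₁ h₂ => rw [map_add, ← h₁, ← h₂]; exact map_add _ _ _
  | add c₁ c₂ h₁ h₂ => rw [map_add, map_add, map_add]; exact congrArg₂ (· + ·) h₁ h₂

lemma pairAct_tmul_right (M N P : LVec k H) (c : H ⊗[k] H) (z : M.V ⊗[k] (N.V ⊗[k] P.V)) :
    pairAct M (N.tmul P) c z = tripleActRight M N P (Coalgebra.comul.lTensor H c) z := by
  induction c using TensorProduct.induction_on with
  | zero => simp only [map_zero, LinearMap.zero_apply]; rfl
  | tmul x y =>
    induction z using TensorProduct.induction_on with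
    | zero => exact map_zero _
    | tmul w p =>
      simp only [pairAct_tmul, tripleActRight, LinearMap.lTensor_tmul, LinearMap.coe_comp,
        Function.comp_apply, map_tmul, AlgHom.toLinearMap_apply, homTensorHomMap_apply]
      rfl
    | add z₁ z₂ h₁ h₂ => rw [map_add, ← h₁, ← h₂]; exact map_add _ _ _
  | add c₁ c₂ h₁ h₂ => rw [map_add, map_add, map_add]; exact congrArg₂ (· + ·) h₁ h₂

lemma assoc_tripleActLeft (M N P : LVec k H) (c : (H ⊗[k] H) ⊗[k] H)
    (z : (M.V ⊗[k] N.V) ⊗[k] P.V) :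
    TensorProduct.assoc k M.V N.V P.V (tripleActLeft M N P c z)
      = tripleActRight M N P (TensorProduct.assoc k H H H c)
          (TensorProduct.assoc k M.V N.V P.V z) := by
  induction c using TensorProduct.induction_on with
  | zero => simp
  | tmul c y =>
    induction c using TensorProduct.induction_on with
    | zero => simp
    | tmul x x' => simp [tripleActLeft, tripleActRight, pairAct_tmul, map_map_assoc]
    | add c₁ c₂ h₁ h₂ => simp only [TensorProduct.add_tmul, map_add, LinearMap.add_apply, h₁, h₂]
  | add c₁ c₂ h₁ h₂ => simp only [map_add, LinearMap.add_apply, h₁, h₂]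

lemma assoc_tmul_ρ (M N P : LVec k H) (h : H) (z : (M.V ⊗[k] N.V) ⊗[k] P.V) :
    TensorProduct.assoc k M.V N.V P.V (((M.tmul N).tmul P).ρ h z)
      = (M.tmul (N.tmul P)).ρ h (TensorProduct.assoc k M.V N.V P.V z) := by
  have hL : ((M.tmul N).tmul P).ρ h z
      = tripleActLeft M N P (Coalgebra.comul.rTensor H (Coalgebra.comul h)) z :=
    pairAct_tmul_left M N P _ z
  have hR : (M.tmul (N.tmul P)).ρ h (TensorProduct.assoc k M.V N.V P.V z)
      = tripleActRight M N P (Coalgebra.comul.lTensor H (Coalgebra.comul h))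
          (TensorProduct.assoc k M.V N.V P.V z) :=
    pairAct_tmul_right M N P _ _
  rw [hL, hR, ← Coalgebra.coassoc_apply, assoc_tripleActLeft]

lemma assoc_symm_tmul_ρ (M N P : LVec k H) (h : H) (w : M.V ⊗[k] (N.V ⊗[k] P.V)) :
    (TensorProduct.assoc k M.V N.V P.V).symm ((M.tmul (N.tmul P)).ρ h w)
      = ((M.tmul N).tmul P).ρ h ((TensorProduct.assoc k M.V N.V P.V).symm w) := by
  have h' := assoc_tmul_ρ M N P h ((TensorProduct.assoc k M.V N.V P.V).symm w)
  rw [LinearEquiv.apply_symm_apply] at h'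
  rw [← h']
  exact LinearEquiv.symm_apply_apply _ _

end HopfModDepth.LVec

namespace SubalgDepth

open Function

variable {k A : Type*} [Field k] [Ring A] [Algebra k A] (B : Subalgebra k A) {n : ℕ}

lemma mk_update_add (v : Fin (n+1) → A) (i : Fin (n+1)) (x y : A) :
    mk B n (update v i (x + y)) = mk B n (update v i x) + mk B n (update v i y) := by
  rw [← sub_eq_zero, sub_add_eq_sub_sub]
  exact (Submodule.Quotient.mk_eq_zero _).mpr (Submodule.subset_span (Or.inl ⟨v, i, x, y, rfl⟩))

lemma mk_update_smul (v : Fin (n+1) → A) (i : Fin (n+1)) (c : k) (x : A) :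
    mk B n (update v i (c • x)) = c • mk B n (update v i x) := by
  rw [← sub_eq_zero]
  exact (Submodule.Quotient.mk_eq_zero _).mpr
    (Submodule.subset_span (Or.inr (Or.inl ⟨v, i, c, x, rfl⟩)))

lemma mk_update_mul_eq_mk_update_mul (v : Fin (n+1) → A) (i : Fin n) (b : B) :
    mk B n (update v i.castSucc (v i.castSucc * b)) = mk B n (update v i.succ (b * v i.succ)) :=
  (Submodule.Quotient.eq _).mpr (Submodule.subset_span (Or.inr (Or.inr ⟨v, i, b, rfl⟩)))

variable {B}

lemma hom_ext {M : Type*} [AddCommGroup M] [Module k M] {f g : TP B n →ₗ[k] M}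
    (hfg : ∀ v, f (mk B n v) = g (mk B n v)) : f = g := by
  refine Submodule.linearMap_qext _ (Finsupp.lhom_ext' fun v => LinearMap.ext_ring ?_)
  exact hfg v

variable {M : Type*} [AddCommGroup M] [Module k M] (G : (Fin (n+1) → A) → M)

noncomputable def lift
    (hadd : ∀ v i x y, G (update v i (x + y)) = G (update v i x) + G (update v i y))
    (hsmul : ∀ v i (c : k) x, G (update v i (c • x)) = c • G (update v i x))
    (hbal : ∀ v (i : Fin n) (b : B),
      G (update v i.castSucc (v i.castSucc * b)) = G (update v i.succ (b * v i.succ))) :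
    TP B n →ₗ[k] M :=
  Submodule.liftQ _ (Finsupp.linearCombination k G) <| (Submodule.span_le).mpr <| by
    rintro z (⟨v, i, x, y, rfl⟩ | ⟨v, i, c, x, rfl⟩ | ⟨v, i, b, rfl⟩) <;>
      simp only [SetLike.mem_coe, LinearMap.mem_ker, map_sub, map_smul,
        Finsupp.linearCombination_single, one_smul]
    · rw [hadd]; abel
    · rw [hsmul, sub_self]
    · rw [hbal, sub_self]

@[simp]
lemma lift_mk {hadd hsmul hbal} (v : Fin (n+1) → A) :
    lift G hadd hsmul hbal (mk B n v) = G v := by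
  show Finsupp.linearCombination k G (Finsupp.single v 1) = G v
  rw [Finsupp.linearCombination_single, one_smul]

variable (B)

lemma Lmul_mk (a : A) (v : Fin (n+1) → A) :
    Lmul B n a (mk B n v) = mk B n (update v 0 (a * v 0)) :=
  congrArg Submodule.Quotient.mk (lF_single n a v 1)

lemma Rmul_mk (a : A) (v : Fin (n+1) → A) :
    Rmul B n a (mk B n v) = mk B n (update v (Fin.last n) (v (Fin.last n) * a)) :=
  congrArg Submodule.Quotient.mk (rF_single n a v 1)

noncomputable def mkSingle : A →ₗ[k] TP B 0 where
  toFun a := mk B 0 fun _ => a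
  map_add' x y := by
    have h := mk_update_add B (0 : Fin 1 → A) 0 x y
    simp only [update_eq_const_of_subsingleton (α := Fin 1)] at h
    exact h
  map_smul' c x := by
    have h := mk_update_smul B (0 : Fin 1 → A) 0 c x
    simp only [update_eq_const_of_subsingleton (α := Fin 1)] at h
    exact h

noncomputable def snoc (n : ℕ) : TP B n →ₗ[k] A →ₗ[k] TP B (n+1) :=
  lift (fun v =>
    { toFun := fun a => mk B (n+1) (Fin.snoc v a)
      map_add' := fun a a' => by
        simpa [Fin.update_snoc_last] using mk_update_add B (Fin.snoc v 0) (Fin.last _) a a'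
      map_smul' := fun c a => by
        simpa [Fin.update_snoc_last] using mk_update_smul B (Fin.snoc v 0) (Fin.last _) c a })
    (fun v i x y => by ext a; simpa using mk_update_add B (Fin.snoc v a) i.castSucc x y)
    (fun v i c x => by ext a; simpa using mk_update_smul B (Fin.snoc v a) i.castSucc c x)
    (fun v i b => by
      ext a
      have h := mk_update_mul_eq_mk_update_mul B (Fin.snoc v a) i.castSucc b
      rw [Fin.succ_castSucc, Fin.snoc_castSucc, Fin.snoc_castSucc] at h
      simpa using h)

@[simp]
lemma snoc_mk (v : Fin (n+1) → A) (a : A) :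
    snoc B n (mk B n v) a = mk B (n+1) (Fin.snoc v a) := by
  simp [snoc]

lemma Rmul_snoc (x : TP B n) (a c : A) : Rmul B (n+1) c (snoc B n x a) = snoc B n x (a * c) := by
  suffices Rmul B (n+1) c ∘ₗ (snoc B n).flip a = (snoc B n).flip (a * c) from
    LinearMap.congr_fun this x
  refine hom_ext fun v => ?_
  simp [Rmul_mk, Fin.update_snoc_last]

lemma snoc_Rmul (x : TP B n) (b : B) (a : A) :
    snoc B n (Rmul B n b x) a = snoc B n x (b * a) := by
  suffices (snoc B n).flip a ∘ₗ Rmul B n b = (snoc B n).flip (b * a) from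
    LinearMap.congr_fun this x
  refine hom_ext fun v => ?_
  simpa [Rmul_mk, Fin.update_snoc_last] using
    mk_update_mul_eq_mk_update_mul B (Fin.snoc v a) (Fin.last n) b

end SubalgDepth

namespace Smash

open HopfModDepth TensorProduct SubalgDepth Function

universe u

variable {k H A S : Type u} [Field k] [Ring H] [Bialgebra k H] [Ring A] [Algebra k A]
  [Ring S] [Algebra k S] {ρ : H →ₐ[k] Module.End k A}

abbrev actionLVec (ρ : H →ₐ[k] Module.End k A) : LVec k H := { V := A, ρ := ρ }

lemma tmul_regular_ρ_lTensor_mulRight (M : LVec k H) (h u : H) (t : M.V ⊗[k] H) :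
    (M.tmul (LVec.regular k H)).ρ h ((LinearMap.mulRight k u).lTensor M.V t)
      = (LinearMap.mulRight k u).lTensor M.V ((M.tmul (LVec.regular k H)).ρ h t) :=
  LVec.tmul_ρ_lTensor M (LVec.regular k H) (LVec.regular k H) _ (fun x w => mul_assoc x w u) h t

lemma nu_tmul (h : H) (a : A) :
    nu k H A ρ (h ⊗ₜ a) = ((actionLVec ρ).tmul (LVec.regular k H)).ρ h (a ⊗ₜ[k] (1 : H)) := by
  suffices key : ∀ c : H ⊗[k] H,
      (TensorProduct.lift ρ.toLinearMap).rTensor H ((TensorProduct.assoc k H A H).symm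
        ((TensorProduct.comm k H A).toLinearMap.lTensor H (TensorProduct.assoc k H H A (c ⊗ₜ a))))
        = (actionLVec ρ).pairAct (LVec.regular k H) c (a ⊗ₜ[k] (1 : H)) from key _
  intro c
  induction c using TensorProduct.induction_on with
  | zero => simp only [zero_tmul, map_zero, LinearMap.zero_apply]; rfl
  | tmul x y =>
    rw [LVec.pairAct_tmul]
    simp only [assoc_tmul, LinearEquiv.coe_coe, LinearMap.lTensor_tmul, comm_tmul,
      assoc_symm_tmul, LinearMap.rTensor_tmul, TensorProduct.lift.tmul, AlgHom.toLinearMap_apply]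
    exact congrArg (ρ x a ⊗ₜ[k] ·) (mul_one y).symm
  | add c₁ c₂ h₁ h₂ =>
    simp only [add_tmul, map_add, LinearMap.add_apply, h₁, h₂]; rfl

namespace SmashData

variable (sd : SmashData k H A ρ S)

lemma e_mul_e_one_tmul (x : A ⊗[k] H) (h : H) :
    sd.e x * sd.e ((1 : A) ⊗ₜ h) = sd.e ((LinearMap.mulRight k h).lTensor A x) := by
  induction x using TensorProduct.induction_on with
  | zero => simp
  | tmul a u => rw [← sd.mulAH a u, mul_assoc, sd.mulHH, sd.mulAH]; rfl
  | add x y hx hy => rw [map_add, add_mul, hx, hy, map_add, map_add]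

lemma e_one_tmul_mul_e (h : H) (x : A ⊗[k] H) :
    sd.e ((1 : A) ⊗ₜ h) * sd.e x = sd.e (((actionLVec ρ).tmul (LVec.regular k H)).ρ h x) := by
  induction x using TensorProduct.induction_on with
  | zero => rw [map_zero, mul_zero]; exact ((congrArg sd.e (map_zero _)).trans (map_zero _)).symm
  | tmul a u =>
    have hu : a ⊗ₜ[k] u = (LinearMap.mulRight k u).lTensor A (a ⊗ₜ[k] (1 : H)) := by simp
    rw [← sd.mulAH a u, ← mul_assoc, sd.mulHA, nu_tmul,
      sd.e_mul_e_one_tmul (((actionLVec ρ).tmul (LVec.regular k H)).ρ h (a ⊗ₜ[k] (1 : H))), hu,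
      tmul_regular_ρ_lTensor_mulRight]
    rfl
  | add x y hx hy =>
    rw [map_add, mul_add, hx, hy]
    exact ((congrArg sd.e (map_add _ x y)).trans (map_add _ _ _)).symm

lemma e_symm_mul_e_one_tmul (s : S) (h : H) :
    sd.e.symm (s * sd.e ((1 : A) ⊗ₜ h)) = (LinearMap.mulRight k h).lTensor A (sd.e.symm s) := by
  rw [LinearEquiv.symm_apply_eq, ← e_mul_e_one_tmul, LinearEquiv.apply_symm_apply]

lemma e_symm_e_one_tmul_mul (h : H) (s : S) :
    sd.e.symm (sd.e ((1 : A) ⊗ₜ h) * s)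
      = ((actionLVec ρ).tmul (LVec.regular k H)).ρ h (sd.e.symm s) := by
  have h' := sd.e_one_tmul_mul_e h (sd.e.symm s)
  rw [LinearEquiv.apply_symm_apply] at h'
  rw [h']
  exact LinearEquiv.symm_apply_apply _ _

/-- `s ↦ h ↦ (1 # h) s`, read back in `A ⊗ H`. -/
noncomputable def oneTmulMul : S →ₗ[k] H →ₗ[k] A ⊗[k] H :=
  ((LinearMap.mul k S).flip.compl₂ (sd.e.toLinearMap ∘ₗ TensorProduct.mk k A H 1)).compr₂
    sd.e.symm.toLinearMap

lemma oneTmulMul_apply (s : S) (h : H) :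
    sd.oneTmulMul s h = sd.e.symm (sd.e ((1 : A) ⊗ₜ h) * s) := rfl

lemma oneTmulMul_e_one (x : A ⊗[k] H) : sd.oneTmulMul (sd.e x) 1 = x := by
  rw [oneTmulMul_apply, sd.unit, one_mul, LinearEquiv.symm_apply_apply]

lemma oneTmulMul_mul (s : S) (x u : H) :
    sd.oneTmulMul s (x * u)
      = ((actionLVec ρ).tmul (LVec.regular k H)).ρ x (sd.oneTmulMul s u) := by
  rw [oneTmulMul_apply, oneTmulMul_apply, ← sd.mulHH, mul_assoc, e_symm_e_one_tmul_mul]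

lemma oneTmulMul_mul_e_one_tmul (s : S) (h h' : H) :
    sd.oneTmulMul (s * sd.e ((1 : A) ⊗ₜ h)) h'
      = (LinearMap.mulRight k h).lTensor A (sd.oneTmulMul s h') := by
  rw [oneTmulMul_apply, oneTmulMul_apply, ← mul_assoc, e_symm_mul_e_one_tmul]

lemma oneTmulMul_mul_right (s : S) (h h' : H) :
    sd.oneTmulMul s (h' * h) = sd.oneTmulMul (sd.e ((1 : A) ⊗ₜ h) * s) h' := by
  rw [oneTmulMul_apply, oneTmulMul_apply, ← sd.mulHH, mul_assoc]

/-- Appending a factor `s` of `A # H`: `t ⊗ h ↦ t ⊗ (1 # h) s`. -/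
noncomputable def snocTensor (n : ℕ) :
    S →ₗ[k] ((actionLVec ρ).tpow n).V ⊗[k] H →ₗ[k] ((actionLVec ρ).tpow (n+1)).V ⊗[k] H :=
  (LinearMap.lTensorHom _ ∘ₗ sd.oneTmulMul).compr₂
    (TensorProduct.assoc k ((actionLVec ρ).tpow n).V A H).symm.toLinearMap

lemma snocTensor_tmul (n : ℕ) (s : S) (u : ((actionLVec ρ).tpow n).V) (h : H) :
    sd.snocTensor n s (u ⊗ₜ h)
      = (TensorProduct.assoc k ((actionLVec ρ).tpow n).V A H).symm (u ⊗ₜ sd.oneTmulMul s h) :=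
  rfl

lemma snocTensor_e_tmul_one (n : ℕ) (x : A ⊗[k] H) (u : ((actionLVec ρ).tpow n).V) :
    sd.snocTensor n (sd.e x) (u ⊗ₜ 1)
      = (TensorProduct.assoc k ((actionLVec ρ).tpow n).V A H).symm (u ⊗ₜ x) := by
  rw [snocTensor_tmul, oneTmulMul_e_one]

lemma snocTensor_mul_e_one_tmul (n : ℕ) (s : S) (h : H)
    (t : ((actionLVec ρ).tpow n).V ⊗[k] H) :
    sd.snocTensor n (s * sd.e ((1 : A) ⊗ₜ h)) t
      = (LinearMap.mulRight k h).lTensor ((actionLVec ρ).tpow (n+1)).V (sd.snocTensor n s t) := by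
  induction t using TensorProduct.induction_on with
  | zero => simp only [map_zero]
  | tmul u h' =>
    rw [snocTensor_tmul, snocTensor_tmul, oneTmulMul_mul_e_one_tmul]
    exact (LinearMap.lTensor_assoc_symm_tmul _ _ _).symm
  | add t₁ t₂ h₁ h₂ => simp only [map_add, h₁, h₂]

lemma snocTensor_lTensor_mulRight (n : ℕ) (s : S) (h : H)
    (t : ((actionLVec ρ).tpow n).V ⊗[k] H) :
    sd.snocTensor n s ((LinearMap.mulRight k h).lTensor _ t)
      = sd.snocTensor n (sd.e ((1 : A) ⊗ₜ h) * s) t := by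
  induction t using TensorProduct.induction_on with
  | zero => simp only [map_zero]
  | tmul u h' =>
    rw [LinearMap.lTensor_tmul, snocTensor_tmul, snocTensor_tmul, LinearMap.mulRight_apply,
      oneTmulMul_mul_right]
  | add t₁ t₂ h₁ h₂ => simp only [map_add, h₁, h₂]

lemma snocTensor_ρ (n : ℕ) (s : S) (h : H) (t : ((actionLVec ρ).tpow n).V ⊗[k] H) :
    sd.snocTensor n s ((((actionLVec ρ).tpow n).tmul (LVec.regular k H)).ρ h t)
      = (((actionLVec ρ).tpow (n+1)).tmul (LVec.regular k H)).ρ h (sd.snocTensor n s t) := by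
  have hlift := LVec.tmul_ρ_lTensor ((actionLVec ρ).tpow n) (LVec.regular k H)
    ((actionLVec ρ).tmul (LVec.regular k H)) (sd.oneTmulMul s) (sd.oneTmulMul_mul s) h t
  have hassoc := LVec.assoc_symm_tmul_ρ ((actionLVec ρ).tpow n) (actionLVec ρ)
    (LVec.regular k H) h ((sd.oneTmulMul s).lTensor _ t)
  exact (congrArg (TensorProduct.assoc k _ A H).symm hlift.symm).trans hassoc

/-- `(a₀ # u₀, …, aₙ # uₙ) ↦ a₀ ⊗ u₀₍₁₎ · a₁ ⊗ ⋯`: the image of a pure tensor of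
`(A # H)^{⊗_H (n+1)}` in `A^{⊗(n+1)} ⊗ H`. -/
noncomputable def tensorOfTuple : (n : ℕ) → (Fin (n+1) → S) → ((actionLVec ρ).tpow n).V ⊗[k] H
  | 0, v => sd.e.symm (v 0)
  | n+1, v => sd.snocTensor n (v (Fin.last (n+1))) (tensorOfTuple n (Fin.init v))

lemma tensorOfTuple_zero (v : Fin 1 → S) : sd.tensorOfTuple 0 v = sd.e.symm (v 0) := rfl

lemma tensorOfTuple_snoc {n : ℕ} (v : Fin (n+1) → S) (s : S) :
    sd.tensorOfTuple (n+1) (Fin.snoc v s) = sd.snocTensor n s (sd.tensorOfTuple n v) := by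
  simp only [tensorOfTuple, Fin.snoc_last, Fin.init_snoc]

lemma tensorOfTuple_update_add {n : ℕ} (v : Fin (n+1) → S) (i : Fin (n+1)) (x y : S) :
    sd.tensorOfTuple n (update v i (x + y))
      = sd.tensorOfTuple n (update v i x) + sd.tensorOfTuple n (update v i y) := by
  induction n with
  | zero =>
    simp only [Fin.fin_one_eq_zero i, tensorOfTuple_zero, update_self, map_add]
    rfl
  | succ n ih =>
    rw [← Fin.snoc_init_self v]
    rcases Fin.eq_castSucc_or_eq_last i with ⟨j, rfl⟩ | rfl
    · simp only [← Fin.snoc_update, tensorOfTuple_snoc, ih, map_add]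
    · simp only [Fin.update_snoc_last, tensorOfTuple_snoc, map_add, LinearMap.add_apply]

lemma tensorOfTuple_update_smul {n : ℕ} (v : Fin (n+1) → S) (i : Fin (n+1)) (c : k) (x : S) :
    sd.tensorOfTuple n (update v i (c • x)) = c • sd.tensorOfTuple n (update v i x) := by
  induction n with
  | zero =>
    simp only [Fin.fin_one_eq_zero i, tensorOfTuple_zero, update_self, map_smul]
    rfl
  | succ n ih =>
    rw [← Fin.snoc_init_self v]
    rcases Fin.eq_castSucc_or_eq_last i with ⟨j, rfl⟩ | rfl
    · simp only [← Fin.snoc_update, tensorOfTuple_snoc, ih, map_smul]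
    · simp only [Fin.update_snoc_last, tensorOfTuple_snoc, map_smul, LinearMap.smul_apply]

lemma tensorOfTuple_update_last_mul {n : ℕ} (v : Fin (n+1) → S) (h : H) :
    sd.tensorOfTuple n (update v (Fin.last n) (v (Fin.last n) * sd.e ((1 : A) ⊗ₜ h)))
      = (LinearMap.mulRight k h).lTensor _ (sd.tensorOfTuple n v) := by
  cases n with
  | zero =>
    simp only [Fin.last_zero, tensorOfTuple_zero, update_self, e_symm_mul_e_one_tmul]
    rfl
  | succ n =>
    rw [← Fin.snoc_init_self v]
    simp only [Fin.snoc_last, Fin.update_snoc_last, tensorOfTuple_snoc,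
      snocTensor_mul_e_one_tmul]

lemma tensorOfTuple_update_mul_eq {n : ℕ} (v : Fin (n+1) → S) (i : Fin n) (h : H) :
    sd.tensorOfTuple n (update v i.castSucc (v i.castSucc * sd.e ((1 : A) ⊗ₜ h)))
      = sd.tensorOfTuple n (update v i.succ (sd.e ((1 : A) ⊗ₜ h) * v i.succ)) := by
  induction n with
  | zero => exact i.elim0
  | succ n ih =>
    rw [← Fin.snoc_init_self v]
    rcases Fin.eq_castSucc_or_eq_last i with ⟨j, rfl⟩ | rfl
    · rw [Fin.succ_castSucc]
      simp only [Fin.snoc_castSucc, ← Fin.snoc_update, tensorOfTuple_snoc, ih]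
    · rw [Fin.succ_last, Fin.update_snoc_last, Fin.snoc_castSucc, ← Fin.snoc_update,
        tensorOfTuple_snoc, tensorOfTuple_snoc, tensorOfTuple_update_last_mul, Fin.snoc_last,
        snocTensor_lTensor_mulRight]

lemma tensorOfTuple_update_zero_mul {n : ℕ} (v : Fin (n+1) → S) (h : H) :
    sd.tensorOfTuple n (update v 0 (sd.e ((1 : A) ⊗ₜ h) * v 0))
      = (((actionLVec ρ).tpow n).tmul (LVec.regular k H)).ρ h (sd.tensorOfTuple n v) := by
  induction n with
  | zero => simp only [tensorOfTuple_zero, update_self]; exact sd.e_symm_e_one_tmul_mul h (v 0)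
  | succ n ih =>
    rw [← Fin.snoc_init_self v, ← Fin.castSucc_zero, Fin.snoc_castSucc, ← Fin.snoc_update,
      tensorOfTuple_snoc, tensorOfTuple_snoc, ih, snocTensor_ρ]

lemma tensorOfTuple_tmul {n : ℕ} (a : Fin (n+1) → A) (h : H) :
    sd.tensorOfTuple n
        (fun i => if i = Fin.last n then sd.e (a i ⊗ₜ h) else sd.e (a i ⊗ₜ 1))
      = (actionLVec ρ).tprod n a ⊗ₜ h := by
  induction n generalizing h with
  | zero =>
    simp only [Fin.fin_one_eq_zero, ↓reduceIte, tensorOfTuple_zero, LinearEquiv.symm_apply_apply]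
    rfl
  | succ n ih =>
    have hinit : Fin.init (fun i => if i = Fin.last (n+1) then sd.e (a i ⊗ₜ h)
        else sd.e (a i ⊗ₜ 1))
        = fun i => if i = Fin.last n then sd.e (a i.castSucc ⊗ₜ[k] (1 : H))
            else sd.e (a i.castSucc ⊗ₜ 1) := by
      ext i
      simp [Fin.init, (Fin.castSucc_lt_last i).ne]
    rw [tensorOfTuple, hinit, ih, if_pos rfl, snocTensor_e_tmul_one]
    rfl

variable (Bsub : Subalgebra k S)

noncomputable def ofTensor : (n : ℕ) → ((actionLVec ρ).tpow n).V ⊗[k] H →ₗ[k] TP Bsub n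
  | 0 => mkSingle Bsub ∘ₗ sd.e.toLinearMap
  | n+1 => TensorProduct.lift
      ((snoc Bsub n ∘ₗ ofTensor n ∘ₗ (TensorProduct.mk k _ H).flip 1).compl₂ sd.e.toLinearMap) ∘ₗ
      (TensorProduct.assoc k ((actionLVec ρ).tpow n).V A H).toLinearMap

lemma ofTensor_zero (x : A ⊗[k] H) :
    sd.ofTensor Bsub 0 x = SubalgDepth.mk Bsub 0 fun _ => sd.e x :=
  rfl

lemma ofTensor_succ_assoc_symm {n : ℕ} (u : ((actionLVec ρ).tpow n).V) (x : A ⊗[k] H) :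
    sd.ofTensor Bsub (n+1) ((TensorProduct.assoc k _ A H).symm (u ⊗ₜ x))
      = snoc Bsub n (sd.ofTensor Bsub n (u ⊗ₜ 1)) (sd.e x) := by
  show TensorProduct.lift _ (TensorProduct.assoc k _ A H ((TensorProduct.assoc k _ A H).symm _)) = _
  rw [LinearEquiv.apply_symm_apply]
  rfl

lemma ofTensor_succ_tmul_tmul {n : ℕ} (u : ((actionLVec ρ).tpow n).V) (a : A) (h : H) :
    sd.ofTensor Bsub (n+1) ((u ⊗ₜ a) ⊗ₜ h)
      = snoc Bsub n (sd.ofTensor Bsub n (u ⊗ₜ 1)) (sd.e (a ⊗ₜ h)) :=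
  rfl

lemma ofTensor_lTensor_mulRight {n : ℕ} (h : H) (t : ((actionLVec ρ).tpow n).V ⊗[k] H) :
    sd.ofTensor Bsub n ((LinearMap.mulRight k h).lTensor _ t)
      = Rmul Bsub n (sd.e ((1 : A) ⊗ₜ h)) (sd.ofTensor Bsub n t) := by
  cases n with
  | zero =>
    show SubalgDepth.mk Bsub 0 (fun _ => sd.e ((LinearMap.mulRight k h).lTensor A t))
      = Rmul Bsub 0 _ (SubalgDepth.mk Bsub 0 fun _ => sd.e t)
    rw [Rmul_mk, Function.update_eq_const_of_subsingleton (α := Fin 1)]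
    exact congrArg (fun s => SubalgDepth.mk Bsub 0 (Function.const _ s))
      (sd.e_mul_e_one_tmul t h).symm
  | succ n =>
    suffices sd.ofTensor Bsub (n+1) ∘ₗ (LinearMap.mulRight k h).lTensor _
        = Rmul Bsub (n+1) (sd.e ((1 : A) ⊗ₜ h)) ∘ₗ sd.ofTensor Bsub (n+1) from
      LinearMap.congr_fun this t
    refine TensorProduct.ext_threefold fun u a h' => ?_
    show sd.ofTensor Bsub (n+1) ((u ⊗ₜ a) ⊗ₜ (h' * h))
      = Rmul Bsub (n+1) _ (sd.ofTensor Bsub (n+1) ((u ⊗ₜ a) ⊗ₜ h'))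
    rw [ofTensor_succ_tmul_tmul, ofTensor_succ_tmul_tmul, Rmul_snoc, sd.e_mul_e_one_tmul]
    rfl

lemma ofTensor_snocTensor (hmem : ∀ h : H, sd.e ((1 : A) ⊗ₜ h) ∈ Bsub) {n : ℕ} (s : S)
    (t : ((actionLVec ρ).tpow n).V ⊗[k] H) :
    sd.ofTensor Bsub (n+1) (sd.snocTensor n s t) = snoc Bsub n (sd.ofTensor Bsub n t) s := by
  suffices sd.ofTensor Bsub (n+1) ∘ₗ sd.snocTensor n s = (snoc Bsub n).flip s ∘ₗ sd.ofTensor Bsub n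
    from LinearMap.congr_fun this t
  refine TensorProduct.ext' fun u h => ?_
  have hu : u ⊗ₜ[k] h = (LinearMap.mulRight k h).lTensor _ (u ⊗ₜ[k] (1 : H)) := by simp
  rw [LinearMap.comp_apply, snocTensor_tmul, ofTensor_succ_assoc_symm, oneTmulMul_apply,
    LinearEquiv.apply_symm_apply, LinearMap.comp_apply, hu, ofTensor_lTensor_mulRight]
  exact (snoc_Rmul Bsub _ ⟨_, hmem h⟩ s).symm

lemma ofTensor_tensorOfTuple (hmem : ∀ h : H, sd.e ((1 : A) ⊗ₜ h) ∈ Bsub) {n : ℕ}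
    (v : Fin (n+1) → S) : sd.ofTensor Bsub n (sd.tensorOfTuple n v) = SubalgDepth.mk Bsub n v := by
  induction n with
  | zero =>
    rw [tensorOfTuple_zero, ofTensor_zero, LinearEquiv.apply_symm_apply]
    exact congrArg _ (funext fun i => congrArg v (Fin.fin_one_eq_zero i).symm)
  | succ n ih =>
    rw [← Fin.snoc_init_self v, tensorOfTuple_snoc, ofTensor_snocTensor sd Bsub hmem, ih, snoc_mk]

variable {Bsub} in
noncomputable def toTensor (hB : (Bsub : Set S) ⊆ Set.range fun h : H => sd.e ((1 : A) ⊗ₜ h))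
    (n : ℕ) : TP Bsub n →ₗ[k] ((actionLVec ρ).tpow n).V ⊗[k] H :=
  SubalgDepth.lift (sd.tensorOfTuple n) sd.tensorOfTuple_update_add sd.tensorOfTuple_update_smul
    fun v i b => by
      obtain ⟨h, hb⟩ := hB b.2
      rw [← hb]
      exact sd.tensorOfTuple_update_mul_eq v i h

variable {Bsub} (hB : (Bsub : Set S) ⊆ Set.range fun h : H => sd.e ((1 : A) ⊗ₜ h))

lemma toTensor_mk {n : ℕ} (v : Fin (n+1) → S) :
    sd.toTensor hB n (SubalgDepth.mk Bsub n v) = sd.tensorOfTuple n v :=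
  lift_mk _ v

lemma toTensor_snoc {n : ℕ} (x : TP Bsub n) (s : S) :
    sd.toTensor hB (n+1) (snoc Bsub n x s) = sd.snocTensor n s (sd.toTensor hB n x) := by
  suffices sd.toTensor hB (n+1) ∘ₗ (snoc Bsub n).flip s = sd.snocTensor n s ∘ₗ sd.toTensor hB n
    from LinearMap.congr_fun this x
  refine hom_ext fun v => ?_
  simp only [LinearMap.comp_apply, LinearMap.flip_apply, snoc_mk, toTensor_mk, tensorOfTuple_snoc]

lemma toTensor_ofTensor {n : ℕ} (t : ((actionLVec ρ).tpow n).V ⊗[k] H) :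
    sd.toTensor hB n (sd.ofTensor Bsub n t) = t := by
  induction n with
  | zero =>
    show sd.toTensor hB 0 (SubalgDepth.mk Bsub 0 fun _ => sd.e t) = t
    rw [toTensor_mk, tensorOfTuple_zero]
    exact sd.e.symm_apply_apply t
  | succ n ih =>
    suffices sd.toTensor hB (n+1) ∘ₗ sd.ofTensor Bsub (n+1) = LinearMap.id
      from LinearMap.congr_fun this t
    refine TensorProduct.ext_threefold fun u a h => ?_
    show sd.toTensor hB (n+1) (sd.ofTensor Bsub (n+1) ((u ⊗ₜ a) ⊗ₜ h)) = (u ⊗ₜ a) ⊗ₜ h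
    rw [ofTensor_succ_tmul_tmul, toTensor_snoc, ih, snocTensor_e_tmul_one]
    rfl

lemma ofTensor_toTensor (hmem : ∀ h : H, sd.e ((1 : A) ⊗ₜ h) ∈ Bsub) {n : ℕ} (x : TP Bsub n) :
    sd.ofTensor Bsub n (sd.toTensor hB n x) = x := by
  suffices sd.ofTensor Bsub n ∘ₗ sd.toTensor hB n = LinearMap.id from LinearMap.congr_fun this x
  refine hom_ext fun v => ?_
  rw [LinearMap.comp_apply, toTensor_mk, ofTensor_tensorOfTuple sd Bsub hmem, LinearMap.id_apply]

lemma toTensor_Lmul {n : ℕ} (h : H) (x : TP Bsub n) :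
    sd.toTensor hB n (Lmul Bsub n (sd.e ((1 : A) ⊗ₜ h)) x)
      = (((actionLVec ρ).tpow n).tmul (LVec.regular k H)).ρ h (sd.toTensor hB n x) := by
  suffices sd.toTensor hB n ∘ₗ Lmul Bsub n (sd.e ((1 : A) ⊗ₜ h))
      = (((actionLVec ρ).tpow n).tmul (LVec.regular k H)).ρ h ∘ₗ sd.toTensor hB n
    from LinearMap.congr_fun this x
  refine hom_ext fun v => ?_
  show sd.toTensor hB n (Lmul Bsub n _ (SubalgDepth.mk Bsub n v))
    = (((actionLVec ρ).tpow n).tmul (LVec.regular k H)).ρ h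
        (sd.toTensor hB n (SubalgDepth.mk Bsub n v))
  rw [Lmul_mk, toTensor_mk, toTensor_mk, tensorOfTuple_update_zero_mul]

lemma toTensor_Rmul {n : ℕ} (h : H) (x : TP Bsub n) :
    sd.toTensor hB n (Rmul Bsub n (sd.e ((1 : A) ⊗ₜ h)) x)
      = (LinearMap.mulRight k h).lTensor _ (sd.toTensor hB n x) := by
  suffices sd.toTensor hB n ∘ₗ Rmul Bsub n (sd.e ((1 : A) ⊗ₜ h))
      = (LinearMap.mulRight k h).lTensor _ ∘ₗ sd.toTensor hB n
    from LinearMap.congr_fun this x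
  refine hom_ext fun v => ?_
  rw [LinearMap.comp_apply, LinearMap.comp_apply, Rmul_mk, toTensor_mk, toTensor_mk,
    tensorOfTuple_update_last_mul]

end SmashData

end Smash

open HopfModDepth Smash TensorProduct in
theorem tensor_powers_of_smash_product_over_hopf_algebra_general
    (k H A S : Type u) [Field k] [Ring H] [HopfAlgebra k H]
    [Ring A] [Algebra k A] [Ring S] [Algebra k S]
    (ρ : H →ₐ[k] Module.End k A)
    (sd : SmashData k H A ρ S) :
    ∀ n : ℕ, ∀ Bsub : Subalgebra k S,
      (Bsub : Set S) = Set.range (fun h : H => sd.e ((1 : A) ⊗ₜ[k] h)) →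
      ∃ φ : SubalgDepth.TP Bsub n ≃ₗ[k]
          ((({ V := A, ρ := ρ } : LVec k H).tpow n).tmul (LVec.regular k H)).V,
        (∀ (h : H) (x : SubalgDepth.TP Bsub n),
          φ (SubalgDepth.Lmul Bsub n (sd.e ((1:A) ⊗ₜ[k] h)) x)
            = ((({ V := A, ρ := ρ } : LVec k H).tpow n).tmul (LVec.regular k H)).ρ h (φ x)) ∧
        (∀ (h : H) (x : SubalgDepth.TP Bsub n),
          φ (SubalgDepth.Rmul Bsub n (sd.e ((1:A) ⊗ₜ[k] h)) x)
            = (LinearMap.lTensor ((({ V := A, ρ := ρ } : LVec k H).tpow n).V)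
                (LinearMap.mulRight k h)) (φ x)) ∧
        (∀ (a : Fin (n+1) → A) (h : H),
          φ (SubalgDepth.mk Bsub n
              (fun i => if i = Fin.last n then sd.e (a i ⊗ₜ[k] h) else sd.e (a i ⊗ₜ[k] 1)))
            = (({ V := A, ρ := ρ } : LVec k H).tprod n a) ⊗ₜ[k] h) := by
  intro n Bsub hB
  have hmem : ∀ h : H, sd.e ((1 : A) ⊗ₜ h) ∈ Bsub := fun h => by
    rw [← SetLike.mem_coe, hB]
    exact Set.mem_range_self h
  refine ⟨LinearEquiv.ofLinearMap (sd.toTensor hB.subset n) (sd.ofTensor Bsub n)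
      (LinearMap.ext (sd.toTensor_ofTensor hB.subset))
      (LinearMap.ext (sd.ofTensor_toTensor hB.subset hmem)),
    sd.toTensor_Lmul hB.subset, sd.toTensor_Rmul hB.subset, fun a h => ?_⟩
  exact (sd.toTensor_mk hB.subset _).trans (sd.tensorOfTuple_tmul a h)

open HopfModDepth Smash TensorProduct in
/-- for a Hopf algebra `H` and a left `H`-module algebra `A`, for every
`n ≥ 1` there is an `H`-`H`-bimodule isomorphism `(A # H)^{⊗_H n} ≅ A^{⊗n} ⊗ H`, where `H`
acts on the right-hand side on the left diagonally (via the iterated comultiplication,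
through the module-algebra action on each `A`-factor and by left multiplication on the
`H`-factor) and on the right by right multiplication on the `H`-factor; the inverse
isomorphism is determined by `a₁ ⊗ ⋯ ⊗ aₙ ⊗ h ↦ (a₁#1) ⊗_H ⋯ ⊗_H (aₙ#h)`, which corresponds
to the explicit formula `a#u ⊗ b#v ⊗ ⋯ ⊗ c#w ↦ a ⊗ u₍₁₎·b ⊗ ⋯ ⊗ u₍ₙ₎v₍ₙ₋₁₎⋯w`. -/
theorem tensor_powers_of_smash_product_over_hopf_algebra
    (k H A S : Type u) [Field k] [Ring H] [HopfAlgebra k H]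
    [Ring A] [Algebra k A] [Ring S] [Algebra k S]
    (ρ : H →ₐ[k] Module.End k A) (hma : IsModuleAlgebra k H A ρ)
    (sd : SmashData k H A ρ S) :
    ∀ n : ℕ, ∀ Bsub : Subalgebra k S,
      (Bsub : Set S) = Set.range (fun h : H => sd.e ((1 : A) ⊗ₜ[k] h)) →
      ∃ φ : SubalgDepth.TP Bsub n ≃ₗ[k]
          ((({ V := A, ρ := ρ } : LVec k H).tpow n).tmul (LVec.regular k H)).V,
        (∀ (h : H) (x : SubalgDepth.TP Bsub n),
          φ (SubalgDepth.Lmul Bsub n (sd.e ((1:A) ⊗ₜ[k] h)) x)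
            = ((({ V := A, ρ := ρ } : LVec k H).tpow n).tmul (LVec.regular k H)).ρ h (φ x)) ∧
        (∀ (h : H) (x : SubalgDepth.TP Bsub n),
          φ (SubalgDepth.Rmul Bsub n (sd.e ((1:A) ⊗ₜ[k] h)) x)
            = (LinearMap.lTensor ((({ V := A, ρ := ρ } : LVec k H).tpow n).V)
                (LinearMap.mulRight k h)) (φ x)) ∧
        (∀ (a : Fin (n+1) → A) (h : H),
          φ (SubalgDepth.mk Bsub n
              (fun i => if i = Fin.last n then sd.e (a i ⊗ₜ[k] h) else sd.e (a i ⊗ₜ[k] 1)))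
            = (({ V := A, ρ := ρ } : LVec k H).tprod n a) ⊗ₜ[k] h) :=
  tensor_powers_of_smash_product_over_hopf_algebra_general k H A S ρ sd
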